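/- Let G be a finite abstract simplicial complex and x ∈ G. Then the unit ball B(x) has Euler characteristic χ(B(x)) = 1. -/
import Mathlib


open Finset Polynomial

namespace SphereFormula

variable {V : Type} [DecidableEq V]

/-- A finite abstract simplicial complex: a finite collection of nonempty finite sets
that is closed under taking nonempty subsets. -/
def IsComplex (G : Finset (Finset V)) : Prop :=
  ∀ x ∈ G, x.Nonempty ∧ ∀ y, y ⊆ x → y.Nonempty → y ∈ G

/-- `w x = (-1)^(dim x)` where `dim x = |x| - 1`. -/
def w (x : Finset V) : ℤ := (-1) ^ (x.card - 1)

/-- Euler characteristic of a finite set of simplices: `χ(A) = Σ_{x ∈ A} w x`. -/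
def chi (A : Finset (Finset V)) : ℤ := ∑ x ∈ A, w x

/-- The star `U(x) = {y ∈ G : x ⊆ y}`. -/
def star (G : Finset (Finset V)) (x : Finset V) : Finset (Finset V) :=
  G.filter fun y => x ⊆ y

/-- The unit ball `B(x) = {z ∈ G : z ⊆ y for some y ∈ U(x)}` (closure of the star). -/
def ball (G : Finset (Finset V)) (x : Finset V) : Finset (Finset V) :=
  G.filter fun z => ∃ y ∈ G, x ⊆ y ∧ z ⊆ y

/-- The unit sphere `S(x) = B(x) \ U(x)`. -/
def sphere (G : Finset (Finset V)) (x : Finset V) : Finset (Finset V) :=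
  ball G x \ star G x

/-- The vertex set of `G`: those `v` with `{v} ∈ G`. -/
def verts (G : Finset (Finset V)) : Finset V :=
  (G.biUnion id).filter fun v => {v} ∈ G

/-- Contractibility, defined inductively: a single vertex complex is contractible, and `G`
is contractible if there is `x ∈ G` with both `S(x)` and `G \ U(x)` contractible. -/
inductive Contractible : Finset (Finset V) → Prop where
  | point (v : V) : Contractible ({({v} : Finset V)} : Finset (Finset V))
  | step (G : Finset (Finset V)) (x : Finset V) (hx : x ∈ G)
      (hS : Contractible (sphere G x)) (hG : Contractible (G \ star G x)) :
      Contractible G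

mutual
  /-- `G` is a `d`-manifold (`d ≥ 0`): every unit sphere `S(x)` is a `(d-1)`-sphere. -/
  inductive IsManifold : ℤ → Finset (Finset V) → Prop where
    | mk (d : ℤ) (G : Finset (Finset V)) (hd : 0 ≤ d)
        (h : ∀ x ∈ G, IsSphere (d - 1) (sphere G x)) : IsManifold d G

  /-- `d`-spheres: the empty complex is the `(-1)`-sphere, and a `d`-sphere is a
  `d`-manifold `G` such that `G \ U(x)` is contractible for some `x ∈ G`. -/
  inductive IsSphere : ℤ → Finset (Finset V) → Prop where
    | empty : IsSphere (-1) (∅ : Finset (Finset V))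
    | mk (d : ℤ) (G : Finset (Finset V)) (hm : IsManifold d G)
        (h : ∃ x ∈ G, Contractible (G \ star G x)) : IsSphere d G
end

/-- The f-function `f_G(t) = 1 + Σ_{k ≥ 0} f_k(G) t^(k+1) = 1 + Σ_{x ∈ G} t^|x|`. -/
noncomputable def fPoly (G : Finset (Finset V)) : Polynomial ℚ :=
  1 + ∑ x ∈ G, Polynomial.X ^ x.card

/-- `F_H(t) = ∫_0^t f_H(s) ds = t + Σ_{k ≥ 0} f_k(H) t^(k+2)/(k+2)`. -/
noncomputable def FPoly (H : Finset (Finset V)) : Polynomial ℚ :=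
  Polynomial.X +
    ∑ x ∈ H, Polynomial.C (((x.card : ℚ) + 1)⁻¹) * Polynomial.X ^ (x.card + 1)

/-- The join `G + H = G ∪ H ∪ {x ∪ y : x ∈ G, y ∈ H}`. -/
def joinC (G H : Finset (Finset V)) : Finset (Finset V) :=
  G ∪ H ∪ (G ×ˢ H).image fun p => p.1 ∪ p.2

/-- The barycentric refinement: simplices are the nonempty chains in `(G, ⊆)`. -/
def bary (G : Finset (Finset V)) : Finset (Finset (Finset V)) :=
  G.powerset.filter fun c => c.Nonempty ∧ ∀ x ∈ c, ∀ y ∈ c, x ⊆ y ∨ y ⊆ x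

/-- `f` is locally injective: distinct vertices of a common simplex have distinct values. -/
def LocallyInjective (G : Finset (Finset V)) (f : V → ℤ) : Prop :=
  ∀ x ∈ G, ∀ v ∈ x, ∀ u ∈ x, v ≠ u → f v ≠ f u

/-- Unit balls: `χ(B(x)) = 1`. -/
theorem chi_ball_eq_one {V : Type} [DecidableEq V]
    (G : Finset (Finset V)) (hG : IsComplex G) (x : Finset V) (hx : x ∈ G) :
    chi (ball G x) = 1 := by
  obtain ⟨v, hv⟩ := (hG x hx).1
  have hvG : ({v} : Finset V) ∈ G :=
    (hG x hx).2 {v} (by simpa using hv) (by simp)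
  have hvB : ({v} : Finset V) ∈ ball G x := by
    simp only [ball, mem_filter]
    exact ⟨hvG, x, hx, subset_rfl, by simpa using hv⟩
  have memball : ∀ z, z ∈ ball G x ↔ z ∈ G ∧ ∃ y ∈ G, x ⊆ y ∧ z ⊆ y := by
    intro z; simp [ball]
  have key : ∑ z ∈ (ball G x).erase {v}, w z = 0 := by
    apply Finset.sum_involution
      (g := fun z _ => if v ∈ z then z.erase v else insert v z)
    · -- w z + w (g z) = 0
      intro z hz
      have hzB := Finset.mem_of_mem_erase hz
      have hzG : z ∈ G := ((memball z).1 hzB).1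
      have hzne : z.Nonempty := (hG z hzG).1
      by_cases hvz : v ∈ z
      · simp only [hvz, if_true]
        have hzv : z ≠ {v} := Finset.ne_of_mem_erase hz
        have h2 : 2 ≤ z.card := by
          have : ({v} : Finset V) ⊂ z :=
            Finset.ssubset_iff_subset_ne.2
              ⟨Finset.singleton_subset_iff.2 hvz, Ne.symm hzv⟩
          have := Finset.card_lt_card this
          simp only [Finset.card_singleton] at this
          omega
        obtain ⟨m, hm⟩ : ∃ m, z.card = m + 2 := ⟨z.card - 2, by omega⟩
        have hce : (z.erase v).card = m + 1 := by
          rw [Finset.card_erase_of_mem hvz]; omega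
        simp only [w, hm, hce]
        simp [pow_succ]
      · simp only [hvz, if_false]
        obtain ⟨m, hm⟩ : ∃ m, z.card = m + 1 :=
          ⟨z.card - 1, by have := Finset.card_pos.2 hzne; omega⟩
        have hci : (insert v z).card = m + 2 := by
          rw [Finset.card_insert_of_notMem hvz, hm]
        simp only [w, hm, hci]
        simp [pow_succ]
    · -- g z ≠ z
      intro z hz _
      by_cases hvz : v ∈ z
      · simp only [hvz, if_true]
        intro h; exact (h ▸ Finset.notMem_erase v z) hvz
      · simp only [hvz, if_false]
        intro h; exact hvz (h ▸ Finset.mem_insert_self v z)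
    · -- involutive
      intro z hz
      by_cases hvz : v ∈ z
      · simp [hvz, Finset.insert_erase hvz]
      · simp [hvz, Finset.erase_insert hvz]
    · -- g z ∈ s
      intro z hz
      have hzB := Finset.mem_of_mem_erase hz
      obtain ⟨hzG, y, hyG, hxy, hzy⟩ := (memball z).1 hzB
      by_cases hvz : v ∈ z
      · have hzv : z ≠ {v} := Finset.ne_of_mem_erase hz
        have hne : (z.erase v).Nonempty := by
          rcases (hG z hzG).1 with ⟨u, hu⟩
          rw [Finset.nonempty_iff_ne_empty]
          intro h
          apply hzv
          apply Finset.eq_singleton_iff_unique_mem.2 ⟨hvz, fun u hu => ?_⟩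
          by_contra hne
          exact (Finset.eq_empty_iff_forall_notMem.1 h u)
            (Finset.mem_erase.2 ⟨hne, hu⟩)
        simp only [hvz, if_true]
        apply Finset.mem_erase.2
        constructor
        · intro h
          exact Finset.notMem_erase v z (h ▸ Finset.mem_singleton_self v)
        · exact (memball _).2 ⟨(hG z hzG).2 _ (Finset.erase_subset v z) hne,
            y, hyG, hxy, (Finset.erase_subset v z).trans hzy⟩
      · simp only [hvz, if_false]
        have hvy : v ∈ y := hxy hv
        have hsub : insert v z ⊆ y := Finset.insert_subset hvy hzy
        apply Finset.mem_erase.2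
        constructor
        · intro h
          rcases (hG z hzG).1 with ⟨u, hu⟩
          have : u ∈ ({v} : Finset V) := h ▸ Finset.mem_insert_of_mem hu
          simp only [Finset.mem_singleton] at this
          exact hvz (this ▸ hu)
        · exact (memball _).2 ⟨(hG y hyG).2 _ hsub ⟨v, Finset.mem_insert_self v z⟩,
            y, hyG, hxy, hsub⟩
  have hsplit : chi (ball G x) = w {v} + ∑ z ∈ (ball G x).erase {v}, w z :=
    (Finset.add_sum_erase _ _ hvB).symm
  rw [hsplit, key]
  simp [w]

end SphereFormula
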